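/- If D : V → W is a linear map between finite-dimensional real inner product spaces (representing the coboundary operator), then the linear subspace D_d = {(f_p, f_q, e_p, e_q) ∈ (W × V) × (V × W) : f_p = -Dᵀ e_q, f_q = D e_p} is maximally isotropic with respect to the symmetric pairing ⟨⟨(f¹,e¹),(f²,e²)⟩⟩ = ⟨e_p¹,f_p²⟩ + ⟨e_q¹,f_q²⟩ + ⟨e_p²,f_p¹⟩ + ⟨e_q²,f_q¹⟩, i.e., D_d equals its orthogonal complement with respect to this pairing. -/
import Mathlib


open RealInnerProductSpace

/-- the boundaryless simplicial Dirac structure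
`D_d = {(f_p, f_q, e_p, e_q) : f_p = -Dᵀ e_q, f_q = D e_p}` is maximally isotropic
(equal to its orthogonal complement) with respect to the symmetric pairing
`⟨⟨(f¹,e¹),(f²,e²)⟩⟩ = ⟨e_p¹,f_p²⟩ + ⟨e_q¹,f_q²⟩ + ⟨e_p²,f_p¹⟩ + ⟨e_q²,f_q¹⟩`. -/
theorem simplicial_dirac_closed_is_dirac
    (V W : Type*) [NormedAddCommGroup V] [InnerProductSpace ℝ V]
    [NormedAddCommGroup W] [InnerProductSpace ℝ W]
    [FiniteDimensional ℝ V] [FiniteDimensional ℝ W]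
    (D : V →ₗ[ℝ] W)
    (B : LinearMap.BilinForm ℝ ((V × W) × (V × W)))
    (hB : ∀ x y : (V × W) × (V × W),
      B x y = ⟪x.2.1, y.1.1⟫ + ⟪x.2.2, y.1.2⟫ + ⟪y.2.1, x.1.1⟫ + ⟪y.2.2, x.1.2⟫)
    (Dd : Submodule ℝ ((V × W) × (V × W)))
    (hDd : ∀ x : (V × W) × (V × W),
      x ∈ Dd ↔ x.1.1 = -(LinearMap.adjoint D) x.2.2 ∧ x.1.2 = D x.2.1) :
    Dd = B.orthogonal Dd := by
  ext x
  constructor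
  · intro hx y hy
    obtain ⟨hx1, hx2⟩ := (hDd x).mp hx
    obtain ⟨hy1, hy2⟩ := (hDd y).mp hy
    show B y x = 0
    rw [hB, hx1, hx2, hy1, hy2]
    simp only [inner_neg_right, LinearMap.adjoint_inner_right]
    rw [real_inner_comm (D y.2.1) x.2.2, real_inner_comm (D x.2.1) y.2.2]
    ring
  · intro hx
    rw [hDd]
    constructor
    · set a : V := x.1.1 + (LinearMap.adjoint D) x.2.2 with ha
      have hy : ((0, D a), (a, (0 : W))) ∈ Dd := by
        rw [hDd]; simp
      have h0 : B ((0, D a), (a, (0 : W))) x = 0 := hx _ hy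
      rw [hB] at h0
      simp only [inner_zero_left, inner_zero_right] at h0
      have : ⟪a, x.1.1 + (LinearMap.adjoint D) x.2.2⟫ = 0 := by
        rw [inner_add_right, LinearMap.adjoint_inner_right,
          real_inner_comm x.2.2 (D a)]
        linarith
      have ha0 : a = 0 := by
        rw [← ha] at this
        exact inner_self_eq_zero.mp this
      have := ha0
      rw [ha] at this
      linear_combination (norm := abel) this
    · set b : W := x.1.2 - D x.2.1 with hb
      have hy : ((-(LinearMap.adjoint D) b, 0), ((0 : V), b)) ∈ Dd := by
        rw [hDd]; simp
      have h0 : B ((-(LinearMap.adjoint D) b, 0), ((0 : V), b)) x = 0 := hx _ hy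
      rw [hB] at h0
      simp only [inner_zero_left, inner_zero_right, inner_neg_right,
        LinearMap.adjoint_inner_right] at h0
      have : ⟪b, x.1.2 - D x.2.1⟫ = 0 := by
        rw [inner_sub_right]
        linarith [real_inner_comm b (D x.2.1)]
      have hb0 : b = 0 := by
        rw [← hb] at this
        exact inner_self_eq_zero.mp this
      have := hb0
      rw [hb] at this
      linear_combination (norm := abel) this
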